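/- If the RKHS H ⊂ C₀(E) is densely and continuously embedded into both L²(μ) and L²(ν), then for every δ > 0 there exists a Hilbert–Schmidt operator A : H → H with ‖A − P‖_{H → L²(μ)} < δ; in particular there is a sequence of finite-rank operators A_n on H with ‖A_n − P‖_{H → L²(μ)} → 0. -/

import Mathlib

/-!
Every `⟪f, φ ·⟫` is a `C₀` function, hence bounded, so Banach–Steinhaus bounds the feature map
uniformly. Pointwise Bessel's inequality then integrates to `∑ ‖iν (b i)‖² ≤ C²`: the embedding
into `L²(ν)` is Hilbert–Schmidt, and so is `P ∘ iν`. The operator norm is dominated by the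
Hilbert–Schmidt norm, so `P ∘ iν` is uniformly close to its truncation to finitely many basis
vectors, and by density of `iμ` the finitely many images `(P ∘ iν) (b i)` may be replaced by
`iμ (w i)`.
-/

open MeasureTheory ProbabilityTheory
open scoped RealInnerProductSpace

theorem exists_forall_norm_le_of_forall_bounded_inner {𝕜 H E : Type*} [RCLike 𝕜]
    [NormedAddCommGroup H] [InnerProductSpace 𝕜 H] [CompleteSpace H] {φ : E → H}
    (hφ : ∀ f : H, ∃ C, ∀ x, ‖inner 𝕜 (φ x) f‖ ≤ C) : ∃ C, ∀ x, ‖φ x‖ ≤ C := by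
  obtain ⟨C, hC⟩ := banach_steinhaus (g := fun x => innerSL 𝕜 (φ x)) hφ
  exact ⟨C, fun x => innerSL_apply_norm 𝕜 (φ x) ▸ hC x⟩

theorem MeasureTheory.L2.norm_sq_eq_integral_sq {E : Type*} [MeasurableSpace E] {ν : Measure E}
    (g : Lp ℝ 2 ν) : ‖g‖ ^ 2 = ∫ x, g x ^ 2 ∂ν := by
  rw [← real_inner_self_eq_norm_sq, L2.inner_def]
  simp [sq]

theorem summable_norm_sq_of_ae_eq_inner {E H ι : Type*} [MeasurableSpace E] {ν : Measure E}
    [IsFiniteMeasure ν] [NormedAddCommGroup H] [InnerProductSpace ℝ H] {φ : E → H} {C : ℝ}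
    (hφ : ∀ᵐ x ∂ν, ‖φ x‖ ≤ C) {v : ι → H} (hv : Orthonormal ℝ v) {g : ι → Lp ℝ 2 ν}
    (hg : ∀ i, (g i : E → ℝ) =ᵐ[ν] fun x => ⟪v i, φ x⟫) :
    Summable fun i => ‖g i‖ ^ 2 := by
  refine summable_of_sum_le (c := C ^ 2 * ν.real Set.univ) (fun i => sq_nonneg _) fun F => ?_
  have hint : ∀ i, Integrable (fun x => g i x ^ 2) ν := fun i => (Lp.memLp (g i)).integrable_sq
  have hae : ∀ᵐ x ∂ν, ∀ i ∈ F, (g i : E → ℝ) x = ⟪v i, φ x⟫ :=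
    (ae_ball_iff F.countable_toSet).2 fun i _ => hg i
  calc ∑ i ∈ F, ‖g i‖ ^ 2 = ∫ x, ∑ i ∈ F, g i x ^ 2 ∂ν := by
        rw [integral_finsetSum F fun i _ => hint i]
        simp only [L2.norm_sq_eq_integral_sq]
    _ ≤ ∫ _, C ^ 2 ∂ν := by
        refine integral_mono_ae (integrable_finsetSum F fun i _ => hint i) (integrable_const _) ?_
        filter_upwards [hae, hφ] with x hx hxC
        calc ∑ i ∈ F, g i x ^ 2 = ∑ i ∈ F, ‖⟪v i, φ x⟫‖ ^ 2 :=
              Finset.sum_congr rfl fun i hi => by rw [hx i hi, Real.norm_eq_abs, sq_abs]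
          _ ≤ ‖φ x‖ ^ 2 := hv.sum_inner_products_le (φ x)
          _ ≤ C ^ 2 := pow_le_pow_left₀ (norm_nonneg _) hxC 2
    _ = C ^ 2 * ν.real Set.univ := by simp [mul_comm]

theorem summable_norm_sq_comp {H K L ι : Type*} [NormedAddCommGroup H] [NormedSpace ℝ H]
    [NormedAddCommGroup K] [NormedSpace ℝ K] [NormedAddCommGroup L] [NormedSpace ℝ L]
    (S : K →L[ℝ] L) {T : H →L[ℝ] K} {v : ι → H} (hT : Summable fun i => ‖T (v i)‖ ^ 2) :
    Summable fun i => ‖S.comp T (v i)‖ ^ 2 := by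
  refine (hT.mul_left (‖S‖ ^ 2)).of_nonneg_of_le (fun i => sq_nonneg _) fun i => ?_
  rw [← mul_pow]
  exact pow_le_pow_left₀ (norm_nonneg _) (S.le_opNorm _) 2

namespace HilbertBasis

variable {H K ι : Type*} [NormedAddCommGroup H] [InnerProductSpace ℝ H]
  [NormedAddCommGroup K] [NormedSpace ℝ K] (b : HilbertBasis ι ℝ H)

theorem opNorm_sq_le_tsum_norm_sq {T : H →L[ℝ] K} (hT : Summable fun i => ‖T (b i)‖ ^ 2) :
    ‖T‖ ^ 2 ≤ ∑' i, ‖T (b i)‖ ^ 2 := by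
  set S := ∑' i, ‖T (b i)‖ ^ 2
  suffices ‖T‖ ≤ √S from (pow_le_pow_left₀ (norm_nonneg _) this 2).trans
    (Real.sq_sqrt (tsum_nonneg fun i => sq_nonneg _)).le
  refine T.opNorm_le_bound (Real.sqrt_nonneg _) fun f => ?_
  have hTf : HasSum (fun i => ⟪b i, f⟫ • T (b i)) (T f) := by
    simpa [b.repr_apply_apply] using (b.hasSum_repr f).mapL T
  have hpartial : ∀ G : Finset ι, ∑ i ∈ G, ‖⟪b i, f⟫ • T (b i)‖ ≤ √S * ‖f‖ := fun G => by
    calc ∑ i ∈ G, ‖⟪b i, f⟫ • T (b i)‖ = ∑ i ∈ G, ‖⟪b i, f⟫‖ * ‖T (b i)‖ := by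
          simp only [norm_smul]
      _ ≤ √(∑ i ∈ G, ‖⟪b i, f⟫‖ ^ 2) * √(∑ i ∈ G, ‖T (b i)‖ ^ 2) :=
          Real.sum_mul_le_sqrt_mul_sqrt G _ _
      _ ≤ ‖f‖ * √S := by
          gcongr
          · exact (Real.sqrt_le_sqrt (b.orthonormal.sum_inner_products_le f)).trans_eq
              (Real.sqrt_sq (norm_nonneg f))
          · exact hT.sum_le_tsum G fun i _ => sq_nonneg _
      _ = √S * ‖f‖ := mul_comm _ _
  have hsum := summable_of_sum_le (fun i => norm_nonneg _) hpartial
  exact (hTf.norm_le_of_bounded hsum.hasSum fun i => le_rfl).trans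
    (hsum.tsum_le_of_sum_le hpartial)

noncomputable def finiteRankMap (F : Finset ι) (w : ι → K) : H →L[ℝ] K :=
  ∑ i ∈ F, (innerSL ℝ (b i)).smulRight (w i)

theorem finiteRankMap_apply (F : Finset ι) (w : ι → K) (f : H) :
    b.finiteRankMap F w f = ∑ i ∈ F, ⟪b i, f⟫ • w i := by
  simp [finiteRankMap]

theorem finiteRankMap_apply_basis [DecidableEq ι] (F : Finset ι) (w : ι → K) (k : ι) :
    b.finiteRankMap F w (b k) = if k ∈ F then w k else 0 := by
  simp [finiteRankMap_apply, orthonormal_iff_ite.1 b.orthonormal]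

theorem finiteDimensional_range_finiteRankMap (F : Finset ι) (w : ι → K) :
    FiniteDimensional ℝ (LinearMap.range (b.finiteRankMap F w).toLinearMap) := by
  have := FiniteDimensional.span_of_finite ℝ (F.finite_toSet.image w)
  refine Submodule.finiteDimensional_of_le (S₂ := Submodule.span ℝ (w '' F)) ?_
  rintro _ ⟨f, rfl⟩
  rw [ContinuousLinearMap.coe_coe, finiteRankMap_apply]
  exact Submodule.sum_mem _ fun i hi =>
    Submodule.smul_mem _ _ (Submodule.subset_span ⟨i, hi, rfl⟩)

theorem summable_norm_sq_finiteRankMap (F : Finset ι) (w : ι → K) :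
    Summable fun i => ‖b.finiteRankMap F w (b i)‖ ^ 2 := by
  classical
  exact summable_of_ne_finset_zero (s := F) fun k hk => by simp [finiteRankMap_apply_basis, hk]

theorem exists_norm_comp_finiteRankMap_sub_lt {T j : H →L[ℝ] K}
    (hT : Summable fun i => ‖T (b i)‖ ^ 2) (hj : DenseRange j) {δ : ℝ} (hδ : 0 < δ) :
    ∃ (F : Finset ι) (w : ι → H), ‖j.comp (b.finiteRankMap F w) - T‖ < δ := by
  classical
  obtain ⟨F, hF⟩ : ∃ F : Finset ι, ∑' k : {k // k ∉ F}, ‖T (b k)‖ ^ 2 < δ ^ 2 / 2 :=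
    ((tendsto_tsum_compl_atTop_zero fun k => ‖T (b k)‖ ^ 2).eventually
      (gt_mem_nhds (by positivity))).exists
  set η := δ ^ 2 / (2 * (F.card + 1))
  have hη : 0 < η := by positivity
  choose w hw using fun k => hj.exists_dist_lt (T (b k)) (Real.sqrt_pos.2 hη)
  refine ⟨F, w, ?_⟩
  set R := j.comp (b.finiteRankMap F w) - T
  have hR : ∀ k, R (b k) = if k ∈ F then j (w k) - T (b k) else -T (b k) := fun k => by
    by_cases hk : k ∈ F <;> simp [R, finiteRankMap_apply_basis, hk]
  have hR_compl : ∀ k : {k // k ∉ F}, ‖R (b k)‖ ^ 2 = ‖T (b k)‖ ^ 2 := fun k => by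
    simp [hR, k.2]
  have hR_summable : Summable fun k => ‖R (b k)‖ ^ 2 :=
    (F.summable_compl_iff).1 <| by simpa only [hR_compl] using (F.summable_compl_iff).2 hT
  have hR_on_F : ∑ k ∈ F, ‖R (b k)‖ ^ 2 ≤ F.card * η := by
    refine (Finset.sum_le_card_nsmul _ _ η fun k hk => ?_).trans_eq (nsmul_eq_mul _ _)
    rw [hR, if_pos hk, ← dist_eq_norm, dist_comm]
    exact ((Real.lt_sqrt dist_nonneg).1 (hw k)).le
  have hsq : ‖R‖ ^ 2 < δ ^ 2 := calc
    ‖R‖ ^ 2 ≤ ∑' k, ‖R (b k)‖ ^ 2 := b.opNorm_sq_le_tsum_norm_sq hR_summable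
    _ = ∑ k ∈ F, ‖R (b k)‖ ^ 2 + ∑' k : {k // k ∉ F}, ‖T (b k)‖ ^ 2 := by
        rw [← hR_summable.sum_add_tsum_compl (s := F)]
        exact congrArg _ (tsum_congr hR_compl)
    _ < F.card * η + δ ^ 2 / 2 := add_lt_add_of_le_of_lt hR_on_F hF
    _ ≤ δ ^ 2 := by
        have : (F.card : ℝ) * η ≤ δ ^ 2 / 2 := by
          rw [mul_div_assoc', div_le_div_iff₀ (by positivity) two_pos]
          nlinarith [sq_nonneg δ]
        linarith
  exact lt_of_pow_lt_pow_left₀ 2 hδ.le hsq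

end HilbertBasis

theorem approximation_by_hilbert_schmidt_general
    {E H ι : Type*}
    [TopologicalSpace E]
    [MeasurableSpace E]
    [NormedAddCommGroup H] [InnerProductSpace ℝ H] [CompleteSpace H]
    (μ ν : Measure E) [IsProbabilityMeasure ν]
    (φ : E → H)
    (hC0 : ∀ f : H, ∃ g : ZeroAtInftyContinuousMap E ℝ, ∀ x, g x = ⟪f, φ x⟫)
    (iμ : H →L[ℝ] Lp ℝ 2 μ)
    (iν : H →L[ℝ] Lp ℝ 2 ν)
    (hiν : ∀ f : H, (iν f : E → ℝ) =ᵐ[ν] fun x => ⟪f, φ x⟫)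
    (hdμ : DenseRange iμ)
    (P : Lp ℝ 2 ν →L[ℝ] Lp ℝ 2 μ)
    (b : HilbertBasis ι ℝ H) :
    (∀ δ > (0 : ℝ), ∃ A : H →L[ℝ] H,
      (Summable fun i => ‖A (b i)‖ ^ 2) ∧ ‖iμ.comp A - P.comp iν‖ < δ) ∧
    ∃ Aseq : ℕ → H →L[ℝ] H,
      (∀ n, FiniteDimensional ℝ (LinearMap.range (Aseq n).toLinearMap)) ∧
      Filter.Tendsto (fun n => ‖iμ.comp (Aseq n) - P.comp iν‖)
        Filter.atTop (nhds 0) := by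
  obtain ⟨C, hC⟩ : ∃ C, ∀ x, ‖φ x‖ ≤ C :=
    exists_forall_norm_le_of_forall_bounded_inner fun f => by
      obtain ⟨g, hg⟩ := hC0 f
      refine ⟨‖g‖, fun x => ?_⟩
      rw [real_inner_comm, ← hg x, ← ZeroAtInftyContinuousMap.norm_toBCF_eq_norm]
      exact g.toBCF.norm_coe_le_norm x
  have hT : Summable fun i => ‖P.comp iν (b i)‖ ^ 2 :=
    summable_norm_sq_comp P <|
      summable_norm_sq_of_ae_eq_inner (ae_of_all _ hC) b.orthonormal fun i => hiν (b i)
  have approx : ∀ δ > (0 : ℝ), ∃ A : H →L[ℝ] H, (Summable fun i => ‖A (b i)‖ ^ 2) ∧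
      FiniteDimensional ℝ (LinearMap.range A.toLinearMap) ∧ ‖iμ.comp A - P.comp iν‖ < δ := by
    intro δ hδ
    obtain ⟨F, w, hFw⟩ := b.exists_norm_comp_finiteRankMap_sub_lt hT hdμ hδ
    exact ⟨_, b.summable_norm_sq_finiteRankMap F w, b.finiteDimensional_range_finiteRankMap F w,
      hFw⟩
  refine ⟨fun δ hδ => (approx δ hδ).imp fun A hA => ⟨hA.1, hA.2.2⟩, ?_⟩
  choose A _ hA_finiteRank hA_lt using fun n : ℕ => approx (1 / (n + 1)) Nat.one_div_pos_of_nat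
  exact ⟨A, hA_finiteRank, squeeze_zero (fun n => norm_nonneg _) (fun n => (hA_lt n).le)
    tendsto_one_div_add_atTop_nhds_zero_nat⟩

/-- If the RKHS `H ⊂ C₀(E)` (with feature map `φ`, functions realized as
`x ↦ ⟪f, φ x⟫`) is densely and continuously embedded into both `L²(μ)` and `L²(ν)`
via the inclusions `iμ`, `iν`, then for every `δ > 0` there is a Hilbert–Schmidt
operator `A : H → H` with `‖A − P‖_{H → L²(μ)} < δ`; in particular there is a
sequence of finite-rank operators `Aₙ` on `H` with `‖Aₙ − P‖_{H → L²(μ)} → 0`. -/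
theorem approximation_by_hilbert_schmidt
    {E H ι : Type*}
    [TopologicalSpace E] [SecondCountableTopology E] [LocallyCompactSpace E] [T2Space E]
    [MeasurableSpace E] [BorelSpace E]
    [NormedAddCommGroup H] [InnerProductSpace ℝ H] [CompleteSpace H]
    (μ ν : Measure E) [IsProbabilityMeasure μ] [IsProbabilityMeasure ν]
    (p : Kernel E E) [IsMarkovKernel p]
    (hmarg : μ.bind (fun x => p x) = ν)
    (φ : E → H) (hφmeas : StronglyMeasurable φ)
    (hC0 : ∀ f : H, ∃ g : ZeroAtInftyContinuousMap E ℝ, ∀ x, g x = ⟪f, φ x⟫)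
    (iμ : H →L[ℝ] Lp ℝ 2 μ)
    (hiμ : ∀ f : H, (iμ f : E → ℝ) =ᵐ[μ] fun x => ⟪f, φ x⟫)
    (iν : H →L[ℝ] Lp ℝ 2 ν)
    (hiν : ∀ f : H, (iν f : E → ℝ) =ᵐ[ν] fun x => ⟪f, φ x⟫)
    (hdμ : DenseRange iμ) (hdν : DenseRange iν)
    (P : Lp ℝ 2 ν →L[ℝ] Lp ℝ 2 μ)
    (hP : ∀ f : Lp ℝ 2 ν, (P f : E → ℝ) =ᵐ[μ] fun x => ∫ y, f y ∂(p x))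
    (b : HilbertBasis ι ℝ H) :
    (∀ δ > (0 : ℝ), ∃ A : H →L[ℝ] H,
      (Summable fun i => ‖A (b i)‖ ^ 2) ∧ ‖iμ.comp A - P.comp iν‖ < δ) ∧
    ∃ Aseq : ℕ → H →L[ℝ] H,
      (∀ n, FiniteDimensional ℝ (LinearMap.range (Aseq n).toLinearMap)) ∧
      Filter.Tendsto (fun n => ‖iμ.comp (Aseq n) - P.comp iν‖)
        Filter.atTop (nhds 0) :=
  approximation_by_hilbert_schmidt_general μ ν φ hC0 iμ iν hiν hdμ P b
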